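/- If the first systems-focal point μ̂₁(a) (the first zero of τ̂' in (a,∞)) exists, then σ̂ > 0 on (a, μ̂₁(a)] and ρ̂(μ̂₁(a)) < 0. -/

import Mathlib

/-!
`τ̂' = u'Tv - v'Tu` equals `1` at `a` and, by minimality of `b`, has no zero in `(a, b)`, so it is
positive there. Both `τ̂` and `η̂ = u'v₁ - v'u₁` vanish at `a` and have derivative `τ̂'`, hence are
positive on `(a, b]`. With `ω̂ = u v₁ - v u₁ = r σ̂'`, the Plücker-type identity
`ω̂ τ̂' = τ̂ η̂ + ρ̂ σ̂` makes `σ̂' > 0` at every zero of `σ̂` in `(a, b]`; as `σ̂` is positive just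
right of `a` (where `ω̂ = ω̂' = 0` and `ω̂'' = 2`), it stays positive on `(a, b]`. At `b` the same
identity with `τ̂'(b) = 0` gives `ρ̂ σ̂ = -τ̂ η̂ < 0`.

Since `q` is only continuous, `T u` may fail to be differentiable, but only at double zeros of `u`.
So `τ̂'` is the derivative of `τ̂` wherever `τ̂` is differentiable, and at `b` differentiability
follows from `σ̂(b) ≠ 0`: the hypothesis `deriv τ̂ b = 0` is not a junk value.
-/

open Set Filter MeasureTheory intervalIntegral

/-- `T4 r q y = (r y'')' - q y'`. -/
noncomputable def T4 (r q y : ℝ → ℝ) : ℝ → ℝ :=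
  fun x => deriv (fun s => r s * deriv (deriv y) s) x - q x * deriv y x

/-- `y` solves `(r y'')'' - (q y')' = p y`, written as `(Ty)' = p y`. -/
def IsSol4 (r p q y : ℝ → ℝ) : Prop :=
  ∀ x, deriv (T4 r q y) x = p x * y x

/-- `σ̂ = u v' - v u'`. -/
noncomputable def sigmaHat (u v : ℝ → ℝ) : ℝ → ℝ :=
  fun x => u x * deriv v x - v x * deriv u x

/-- `τ̂ = u ⬝ Tv - v ⬝ Tu`. -/
noncomputable def tauHat (r q u v : ℝ → ℝ) : ℝ → ℝ :=
  fun x => u x * T4 r q v x - v x * T4 r q u x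

/-- `ρ̂ = u₁ ⬝ Tv - v₁ ⬝ Tu` where `y₁ = r y''`. -/
noncomputable def rhoHat (r q u v : ℝ → ℝ) : ℝ → ℝ :=
  fun x => (r x * deriv (deriv u) x) * T4 r q v x - (r x * deriv (deriv v) x) * T4 r q u x

/-- Initial conditions of the fundamental solutions `u`, `v`:
`u(a) = u₁(a) = Tu(a) = 0`, `u'(a) = 1`, and `v(a) = v'(a) = v₁(a) = 0`, `Tv(a) = 1`. -/
def FundIC (r q : ℝ → ℝ) (a : ℝ) (u v : ℝ → ℝ) : Prop :=
  u a = 0 ∧ r a * deriv (deriv u) a = 0 ∧ T4 r q u a = 0 ∧ deriv u a = 1 ∧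
  v a = 0 ∧ deriv v a = 0 ∧ r a * deriv (deriv v) a = 0 ∧ T4 r q v a = 1

open Topology

theorem HasDerivAt.mul_continuousAt_of_eq_zero {f g : ℝ → ℝ} {f' x : ℝ} (hf : HasDerivAt f f' x)
    (hfx : f x = 0) (hg : ContinuousAt g x) : HasDerivAt (fun y => f y * g y) (f' * g x) x := by
  rw [hasDerivAt_iff_tendsto_slope] at hf ⊢
  refine (hf.mul (hg.tendsto.mono_left nhdsWithin_le_nhds)).congr' ?_
  filter_upwards with y
  simp only [slope_def_field, hfx, sub_zero]
  ring

theorem hasDerivAt_of_eventually_hasDerivAt {f g : ℝ → ℝ} {x : ℝ}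
    (h : ∀ᶠ y in 𝓝[≠] x, HasDerivAt f (g y) y) (hf : ContinuousAt f x) (hg : ContinuousAt g x) :
    HasDerivAt f (g x) x := by
  have hd : DifferentiableOn ℝ f {y | HasDerivAt f (g y) y} := fun y hy =>
    hy.differentiableAt.differentiableWithinAt
  have hlim {l : Filter ℝ} (hl : l ≤ 𝓝[≠] x) : Tendsto (deriv f) l (𝓝 (g x)) :=
    (hg.tendsto.mono_left (hl.trans nhdsWithin_le_nhds)).congr'
      ((h.filter_mono hl).mono fun y hy => hy.deriv.symm)
  have hlt : 𝓝[<] x ≤ 𝓝[≠] x := nhdsWithin_mono _ fun y hy => ne_of_lt hy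
  have hgt : 𝓝[>] x ≤ 𝓝[≠] x := nhdsWithin_mono _ fun y hy => ne_of_gt hy
  simpa using (hasDerivWithinAt_Iic_of_tendsto_deriv hd hf.continuousWithinAt
    (h.filter_mono hlt) (hlim hlt)).union
    (hasDerivWithinAt_Ici_of_tendsto_deriv hd hf.continuousWithinAt (h.filter_mono hgt) (hlim hgt))

theorem DifferentiableAt.of_mul_left {f g : ℝ → ℝ} {x : ℝ}
    (h : DifferentiableAt ℝ (fun y => f y * g y) x) (hf : DifferentiableAt ℝ f x) (hfx : f x ≠ 0) :
    DifferentiableAt ℝ g x := by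
  refine (h.div hf hfx).congr_of_eventuallyEq ?_
  filter_upwards [hf.continuousAt.eventually_ne hfx] with y hy
  simp only [Pi.div_apply]
  field_simp

theorem pos_on_Ioc_of_deriv_pos {f : ℝ → ℝ} {a b : ℝ} (hf : ContinuousOn f (Icc a b)) (ha : f a = 0)
    (hpos : ∀ x ∈ Ioo a b, 0 < deriv f x) : ∀ x ∈ Ioc a b, 0 < f x := by
  intro x hx
  have hmono := strictMonoOn_of_deriv_pos (convex_Icc a b) hf (by rwa [interior_Icc])
  simpa [ha] using hmono (left_mem_Icc.2 (hx.1.trans_le hx.2).le) (Ioc_subset_Icc_self hx) hx.1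

theorem eventually_pos_of_deriv_pos {f : ℝ → ℝ} {a : ℝ} (hf : Continuous f) (ha : f a = 0)
    (hpos : ∀ᶠ x in 𝓝[>] a, 0 < deriv f x) : ∀ᶠ x in 𝓝[>] a, 0 < f x := by
  obtain ⟨e, hae, he⟩ := mem_nhdsGT_iff_exists_Ioo_subset.1 hpos
  filter_upwards [Ioo_mem_nhdsGT hae] with x hx
  exact pos_on_Ioc_of_deriv_pos hf.continuousOn ha (fun y hy => he ⟨hy.1, hy.2.trans hx.2⟩) x
    ⟨hx.1, le_rfl⟩

theorem eventually_pos_of_iteratedDeriv {n : ℕ} {f : ℝ → ℝ} {a : ℝ} (hf : ContDiff ℝ n f)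
    (hzero : ∀ k < n, iteratedDeriv k f a = 0) (hpos : 0 < iteratedDeriv n f a) :
    ∀ᶠ x in 𝓝[>] a, 0 < f x := by
  induction n generalizing f with
  | zero =>
    rw [iteratedDeriv_zero] at hpos
    exact (continuousAt_const.eventually_lt hf.continuous.continuousAt hpos).filter_mono
      nhdsWithin_le_nhds
  | succ n ih =>
    refine eventually_pos_of_deriv_pos hf.continuous (by simpa using hzero 0 n.succ_pos) ?_
    refine ih hf.deriv' (fun k hk => ?_) (by rwa [← iteratedDeriv_succ'])
    rw [← iteratedDeriv_succ']
    exact hzero (k + 1) (by omega)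

theorem pos_on_Ioo_of_ne_zero {f : ℝ → ℝ} {a b : ℝ} (hf : ContinuousOn f (Ico a b))
    (ha : 0 < f a) (hne : ∀ x ∈ Ioo a b, f x ≠ 0) : ∀ x ∈ Ioo a b, 0 < f x := by
  intro x hx
  by_contra! hle
  obtain ⟨z, hz, hz0⟩ := isPreconnected_Ico.intermediate_value
    (Ioo_subset_Ico_self hx) (left_mem_Ico.2 (hx.1.trans hx.2)) hf ⟨hle, ha.le⟩
  rcases hz.1.eq_or_lt with rfl | haz
  · exact ha.ne' hz0
  · exact hne z ⟨haz, hz.2⟩ hz0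

theorem pos_on_Ioc_of_deriv_pos_at_zeros {f : ℝ → ℝ} {a b : ℝ} (hf : ContinuousOn f (Icc a b))
    (hstart : ∀ᶠ x in 𝓝[>] a, 0 < f x) (hzero : ∀ c ∈ Ioc a b, f c = 0 → 0 < deriv f c) :
    ∀ x ∈ Ioc a b, 0 < f x := by
  by_contra! hneg
  set S := {x | x ∈ Ioc a b ∧ f x ≤ 0}
  have hSne : S.Nonempty := hneg
  have hSbdd : BddBelow S := ⟨a, fun y hy => hy.1.1.le⟩
  set c := sInf S
  obtain ⟨e, hae, he⟩ := mem_nhdsGT_iff_exists_Ioo_subset.1 hstart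
  have hec : e ≤ c := le_csInf hSne fun y hy => not_lt.1 fun hye => (he ⟨hy.1.1, hye⟩).not_ge hy.2
  have hclosed : IsClosed (Icc a b ∩ f ⁻¹' Iic 0) :=
    hf.preimage_isClosed_of_isClosed isClosed_Icc isClosed_Iic
  have hcS : c ∈ Icc a b ∩ f ⁻¹' Iic 0 :=
    closure_minimal (t := Icc a b ∩ f ⁻¹' Iic 0) (fun y hy => ⟨Ioc_subset_Icc_self hy.1, hy.2⟩)
      hclosed (csInf_mem_closure hSne hSbdd)
  have hac : a < c := hae.trans_le hec
  have hleft : ∀ y ∈ Ioo a c, 0 < f y := fun y hy => not_le.1 fun hfy =>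
    (csInf_le hSbdd ⟨⟨hy.1, hy.2.le.trans hcS.1.2⟩, hfy⟩).not_gt hy.2
  have hfc : f c = 0 := by
    have hmem : c ∈ closure (Ioo a c) := by
      rw [closure_Ioo hac.ne]
      exact right_mem_Icc.2 hac.le
    refine le_antisymm hcS.2 (continuousWithinAt_const.closure_le hmem
      ((hf.continuousWithinAt hcS.1).mono fun y hy => ⟨hy.1.le, hy.2.le.trans hcS.1.2⟩)
      fun y hy => (hleft y hy).le)
  have hsign := eventually_nhdsWithin_sign_eq_of_deriv_pos (hzero c ⟨hac, hcS.1.2⟩ hfc) hfc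
  obtain ⟨y, hy, hyc⟩ := ((hsign.filter_mono nhdsWithin_le_nhds).and (Ioo_mem_nhdsLT hac)).exists
  rw [sign_pos (hleft y hyc), sign_neg (sub_neg.2 hyc.2)] at hy
  exact absurd hy (by decide)

theorem nonneg_on_Icc_of_pos_on_Ioo {f : ℝ → ℝ} {a b : ℝ} (hab : a < b)
    (hf : ContinuousOn f (Icc a b)) (hpos : ∀ x ∈ Ioo a b, 0 < f x) : ∀ x ∈ Icc a b, 0 ≤ f x := by
  rw [← closure_Ioo hab.ne]
  exact fun x hx => continuousWithinAt_const.closure_le hx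
    ((hf x (closure_Ioo hab.ne ▸ hx)).mono Ioo_subset_Icc_self) fun y hy => (hpos y hy).le

noncomputable def quasiDeriv (r y : ℝ → ℝ) : ℝ → ℝ := fun x => r x * deriv (deriv y) x

section Solution

variable {r p q y z : ℝ → ℝ} {x : ℝ}

theorem hasDerivAt_quasiDeriv (h : DifferentiableAt ℝ (quasiDeriv r y) x) :
    HasDerivAt (quasiDeriv r y) (T4 r q y x + q x * deriv y x) x := by
  rw [show T4 r q y x + q x * deriv y x = deriv (quasiDeriv r y) x by unfold T4 quasiDeriv; ring]
  exact h.hasDerivAt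

theorem continuous_T4 (hq : Continuous q) (hy : ContDiff ℝ 1 y)
    (hry : ContDiff ℝ 1 (quasiDeriv r y)) : Continuous (T4 r q y) :=
  (hry.continuous_deriv le_rfl).sub (hq.mul (hy.continuous_deriv le_rfl))

theorem IsSol4.hasDerivAt_T4 (hsol : IsSol4 r p q y) (h : DifferentiableAt ℝ (T4 r q y) x) :
    HasDerivAt (T4 r q y) (p x * y x) x :=
  hsol x ▸ h.hasDerivAt

theorem IsSol4.eq_zero_of_not_differentiableAt (hsol : IsSol4 r p q y) (hp : p x ≠ 0)
    (h : ¬DifferentiableAt ℝ (T4 r q y) x) : y x = 0 := by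
  have := hsol x
  rw [deriv_zero_of_not_differentiableAt h] at this
  exact (mul_eq_zero.1 this.symm).resolve_left hp

theorem IsSol4.differentiableAt_T4 (hsol : IsSol4 r p q y) (hp : ∀ᶠ z in 𝓝 x, p z ≠ 0)
    (hpc : ContinuousAt p x) (hy : DifferentiableAt ℝ y x) (hT : ContinuousAt (T4 r q y) x)
    (hyx : y x ≠ 0 ∨ deriv y x ≠ 0) : DifferentiableAt ℝ (T4 r q y) x := by
  have hnonzero (z) (hpz : p z ≠ 0) (hyz : y z ≠ 0) : DifferentiableAt ℝ (T4 r q y) z :=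
    not_imp_comm.1 (hsol.eq_zero_of_not_differentiableAt hpz) hyz
  rcases hyx with hyx | hy'x
  · exact hnonzero x hp.self_of_nhds hyx
  · have hne : ∀ᶠ z in 𝓝[≠] x, y z ≠ 0 := hy.hasDerivAt.eventually_ne hy'x
    refine (hasDerivAt_of_eventually_hasDerivAt (g := fun z => p z * y z) ?_ hT
      (hpc.mul hy.continuousAt)).differentiableAt
    filter_upwards [hne, nhdsWithin_le_nhds hp] with z hyz hpz
    exact hsol.hasDerivAt_T4 (hnonzero z hpz hyz)

theorem differentiableAt_T4_or_eq_zero (hzsol : IsSol4 r p q z) (hp : p x ≠ 0)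
    (hy : DifferentiableAt ℝ y x) (hz : DifferentiableAt ℝ z x)
    (h : DifferentiableAt ℝ (fun t => z t * T4 r q y t - y t * T4 r q z t) x) :
    DifferentiableAt ℝ (T4 r q y) x ∨ z x = 0 := by
  refine or_iff_not_imp_right.2 fun hzx => DifferentiableAt.of_mul_left ?_ hz hzx
  have hTz : DifferentiableAt ℝ (T4 r q z) x :=
    not_imp_comm.1 (hzsol.eq_zero_of_not_differentiableAt hp) hzx
  simpa using h.fun_add (hy.fun_mul hTz)

theorem IsSol4.hasDerivAt_mul_T4 (hsol : IsSol4 r p q y) {g : ℝ → ℝ}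
    (hg : DifferentiableAt ℝ g x) (hT : ContinuousAt (T4 r q y) x)
    (h : DifferentiableAt ℝ (T4 r q y) x ∨ g x = 0) :
    HasDerivAt (fun z => g z * T4 r q y z) (deriv g x * T4 r q y x + g x * (p x * y x)) x := by
  rcases h with h | h
  · exact hg.hasDerivAt.mul (hsol.hasDerivAt_T4 h)
  · simpa [h] using hg.hasDerivAt.mul_continuousAt_of_eq_zero h hT

end Solution

noncomputable def tauHatDeriv (r q u v : ℝ → ℝ) : ℝ → ℝ :=
  fun x => deriv u x * T4 r q v x - deriv v x * T4 r q u x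

-- For the fundamental pair and smooth `q` this is `τ̂`; unlike `τ̂`, it is always `C¹`.
noncomputable def etaHat (r u v : ℝ → ℝ) : ℝ → ℝ :=
  fun x => deriv u x * quasiDeriv r v x - deriv v x * quasiDeriv r u x

noncomputable def omegaHat (r u v : ℝ → ℝ) : ℝ → ℝ :=
  fun x => u x * quasiDeriv r v x - v x * quasiDeriv r u x

section Pair

variable {r p q u v : ℝ → ℝ} {a x : ℝ}

-- The paper's `r σ̂' τ̂' = τ̂² + ρ̂ σ̂`, with one factor `τ̂` replaced by `η̂`.
theorem omegaHat_mul_tauHatDeriv :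
    omegaHat r u v x * tauHatDeriv r q u v x =
      tauHat r q u v x * etaHat r u v x + rhoHat r q u v x * sigmaHat u v x := by
  simp only [omegaHat, tauHatDeriv, tauHat, etaHat, rhoHat, sigmaHat, quasiDeriv]
  ring

theorem hasDerivAt_tauHat (husol : IsSol4 r p q u) (hvsol : IsSol4 r p q v)
    (hu : DifferentiableAt ℝ u x) (hv : DifferentiableAt ℝ v x)
    (hTu : ContinuousAt (T4 r q u) x) (hTv : ContinuousAt (T4 r q v) x) (hp : p x ≠ 0)
    (hτ : DifferentiableAt ℝ (tauHat r q u v) x) :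
    HasDerivAt (tauHat r q u v) (tauHatDeriv r q u v x) x := by
  have hTu' := differentiableAt_T4_or_eq_zero hvsol hp hu hv
    (hτ.neg.congr_of_eventuallyEq (.of_forall fun t => by simp only [Pi.neg_apply, tauHat]; ring))
  have hTv' := differentiableAt_T4_or_eq_zero husol hp hv hu hτ
  refine ((hvsol.hasDerivAt_mul_T4 hu hTv hTv').sub
    (husol.hasDerivAt_mul_T4 hv hTu hTu')).congr_deriv ?_
  simp only [tauHatDeriv]
  ring

theorem differentiableAt_tauHat (husol : IsSol4 r p q u) (hvsol : IsSol4 r p q v)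
    (hp : ∀ᶠ z in 𝓝 x, p z ≠ 0) (hpc : ContinuousAt p x)
    (hu : DifferentiableAt ℝ u x) (hv : DifferentiableAt ℝ v x)
    (hTu : ContinuousAt (T4 r q u) x) (hTv : ContinuousAt (T4 r q v) x)
    (hσ : sigmaHat u v x ≠ 0) : DifferentiableAt ℝ (tauHat r q u v) x := by
  have hux : u x ≠ 0 ∨ deriv u x ≠ 0 := by
    by_contra! h
    exact hσ (by simp [sigmaHat, h.1, h.2])
  have hvx : v x ≠ 0 ∨ deriv v x ≠ 0 := by
    by_contra! h
    exact hσ (by simp [sigmaHat, h.1, h.2])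
  exact (hu.mul (hvsol.differentiableAt_T4 hp hpc hv hTv hvx)).sub
    (hv.mul (husol.differentiableAt_T4 hp hpc hu hTu hux))

theorem hasDerivAt_etaHat (hu : DifferentiableAt ℝ (deriv u) x)
    (hv : DifferentiableAt ℝ (deriv v) x) (hru : DifferentiableAt ℝ (quasiDeriv r u) x)
    (hrv : DifferentiableAt ℝ (quasiDeriv r v) x) :
    HasDerivAt (etaHat r u v) (tauHatDeriv r q u v x) x := by
  refine ((hu.hasDerivAt.mul (hasDerivAt_quasiDeriv (q := q) hrv)).sub
    (hv.hasDerivAt.mul (hasDerivAt_quasiDeriv (q := q) hru))).congr_deriv ?_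
  simp only [tauHatDeriv, quasiDeriv]
  ring

theorem hasDerivAt_sigmaHat (hu : DifferentiableAt ℝ u x) (hv : DifferentiableAt ℝ v x)
    (hu' : DifferentiableAt ℝ (deriv u) x) (hv' : DifferentiableAt ℝ (deriv v) x)
    (hr : r x ≠ 0) : HasDerivAt (sigmaHat u v) (omegaHat r u v x / r x) x := by
  refine ((hu.hasDerivAt.mul hv'.hasDerivAt).sub (hv.hasDerivAt.mul hu'.hasDerivAt)).congr_deriv ?_
  simp only [omegaHat, quasiDeriv]
  field_simp
  ring

theorem continuous_sigmaHat (hu : ContDiff ℝ 1 u) (hv : ContDiff ℝ 1 v) :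
    Continuous (sigmaHat u v) :=
  (hu.continuous.mul (hv.continuous_deriv le_rfl)).sub
    (hv.continuous.mul (hu.continuous_deriv le_rfl))

end Pair

namespace FundIC

variable {r q u v : ℝ → ℝ} {a b : ℝ}

theorem sigmaHat_eq_zero (hic : FundIC r q a u v) : sigmaHat u v a = 0 := by
  obtain ⟨hua, -, -, -, hva, -⟩ := hic
  simp [sigmaHat, hua, hva]

theorem tauHat_eq_zero (hic : FundIC r q a u v) : tauHat r q u v a = 0 := by
  obtain ⟨hua, -, -, -, hva, -⟩ := hic
  simp [tauHat, hua, hva]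

theorem etaHat_eq_zero (hic : FundIC r q a u v) : etaHat r u v a = 0 := by
  obtain ⟨-, -, -, -, -, hv'a, hv1a, -⟩ := hic
  simp [etaHat, quasiDeriv, hv'a, hv1a]

theorem tauHatDeriv_eq_one (hic : FundIC r q a u v) : tauHatDeriv r q u v a = 1 := by
  obtain ⟨-, -, hTua, hu'a, -, hv'a, -, hTva⟩ := hic
  simp [tauHatDeriv, hTua, hu'a, hv'a, hTva]

theorem omegaHat_eventually_pos (hic : FundIC r q a u v) (hu : ContDiff ℝ 2 u)
    (hv : ContDiff ℝ 2 v) (hru : ContDiff ℝ 2 (quasiDeriv r u))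
    (hrv : ContDiff ℝ 2 (quasiDeriv r v)) : ∀ᶠ x in 𝓝[>] a, 0 < omegaHat r u v x := by
  obtain ⟨hua, hu1a, -, hu'a, hva, hv'a, hv1a, hTva⟩ := hic
  replace hu1a : quasiDeriv r u a = 0 := hu1a
  replace hv1a : quasiDeriv r v a = 0 := hv1a
  have hud : Differentiable ℝ u := hu.differentiable (by norm_num)
  have hvd : Differentiable ℝ v := hv.differentiable (by norm_num)
  have hu'd : Differentiable ℝ (deriv u) := hu.differentiable_deriv_two
  have hv'd : Differentiable ℝ (deriv v) := hv.differentiable_deriv_two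
  have hrud : Differentiable ℝ (quasiDeriv r u) := hru.differentiable (by norm_num)
  have hrvd : Differentiable ℝ (quasiDeriv r v) := hrv.differentiable (by norm_num)
  have hru'd : Differentiable ℝ (deriv (quasiDeriv r u)) := hru.differentiable_deriv_two
  have hrv'd : Differentiable ℝ (deriv (quasiDeriv r v)) := hrv.differentiable_deriv_two
  have hrv'a : deriv (quasiDeriv r v) a = 1 := by
    simp [(hasDerivAt_quasiDeriv (q := q) (hrvd a)).deriv, hTva, hv'a]
  have hω' : deriv (omegaHat r u v) = fun x =>
      deriv u x * quasiDeriv r v x + u x * deriv (quasiDeriv r v) x -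
        (deriv v x * quasiDeriv r u x + v x * deriv (quasiDeriv r u) x) :=
    funext fun x => ((hud x).hasDerivAt.mul (hrvd x).hasDerivAt).sub
      ((hvd x).hasDerivAt.mul (hrud x).hasDerivAt) |>.deriv
  refine eventually_pos_of_iteratedDeriv (n := 2) ((hu.mul hrv).sub (hv.mul hru)) ?_ ?_
  · intro k hk
    interval_cases k
    · simp [omegaHat, hua, hva]
    · simp [hω', hua, hva, hv'a, hu1a, hv1a]
  · have hω'' := (((hu'd a).hasDerivAt.fun_mul (hrvd a).hasDerivAt).fun_add
      ((hud a).hasDerivAt.fun_mul (hrv'd a).hasDerivAt)).fun_sub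
      (((hv'd a).hasDerivAt.fun_mul (hrud a).hasDerivAt).fun_add
      ((hvd a).hasDerivAt.fun_mul (hru'd a).hasDerivAt))
    rw [iteratedDeriv_succ, iteratedDeriv_one, hω', hω''.deriv]
    simp [hua, hva, hu'a, hv'a, hu1a, hv1a, hrv'a]

theorem sigmaHat_eventually_pos (hic : FundIC r q a u v) (hr : ∀ᶠ x in 𝓝[>] a, 0 < r x)
    (hu : ContDiff ℝ 2 u) (hv : ContDiff ℝ 2 v) (hru : ContDiff ℝ 2 (quasiDeriv r u))
    (hrv : ContDiff ℝ 2 (quasiDeriv r v)) : ∀ᶠ x in 𝓝[>] a, 0 < sigmaHat u v x := by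
  have hud : Differentiable ℝ u := hu.differentiable (by norm_num)
  have hvd : Differentiable ℝ v := hv.differentiable (by norm_num)
  have hu'd : Differentiable ℝ (deriv u) := hu.differentiable_deriv_two
  have hv'd : Differentiable ℝ (deriv v) := hv.differentiable_deriv_two
  refine eventually_pos_of_deriv_pos (continuous_sigmaHat (hu.of_le (by norm_num))
    (hv.of_le (by norm_num))) hic.sigmaHat_eq_zero ?_
  filter_upwards [hic.omegaHat_eventually_pos hu hv hru hrv, hr] with x hω hrx
  rw [(hasDerivAt_sigmaHat (hud x) (hvd x) (hu'd x) (hv'd x) hrx.ne').deriv]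
  exact div_pos hω hrx

theorem etaHat_pos (hic : FundIC r q a u v) (hu : ContDiff ℝ 2 u) (hv : ContDiff ℝ 2 v)
    (hru : ContDiff ℝ 2 (quasiDeriv r u)) (hrv : ContDiff ℝ 2 (quasiDeriv r v))
    (hW : ∀ x ∈ Ioo a b, 0 < tauHatDeriv r q u v x) : ∀ x ∈ Ioc a b, 0 < etaHat r u v x := by
  refine pos_on_Ioc_of_deriv_pos (((hu.continuous_deriv (by norm_num)).mul hrv.continuous).sub
    ((hv.continuous_deriv (by norm_num)).mul hru.continuous)).continuousOn hic.etaHat_eq_zero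
    fun x hx => ?_
  rw [(hasDerivAt_etaHat (q := q) (hu.differentiable_deriv_two x) (hv.differentiable_deriv_two x)
    (hru.differentiable (by norm_num) x) (hrv.differentiable (by norm_num) x)).deriv]
  exact hW x hx

theorem sigmaHat_pos (hic : FundIC r q a u v)
    (hr : ∀ x ∈ Ioi a, 0 < r x) (hu : ContDiff ℝ 2 u) (hv : ContDiff ℝ 2 v)
    (hru : ContDiff ℝ 2 (quasiDeriv r u)) (hrv : ContDiff ℝ 2 (quasiDeriv r v))
    (hτ : ∀ x ∈ Ioc a b, 0 < tauHat r q u v x) (hη : ∀ x ∈ Ioc a b, 0 < etaHat r u v x)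
    (hW : ∀ x ∈ Ioc a b, 0 ≤ tauHatDeriv r q u v x) : ∀ x ∈ Ioc a b, 0 < sigmaHat u v x := by
  refine pos_on_Ioc_of_deriv_pos_at_zeros
    (continuous_sigmaHat (hu.of_le (by norm_num)) (hv.of_le (by norm_num))).continuousOn
    (hic.sigmaHat_eventually_pos (eventually_nhdsWithin_of_forall hr) hu hv hru hrv)
    fun c hc hσc => ?_
  have hωW : 0 < omegaHat r u v c * tauHatDeriv r q u v c := by
    rw [omegaHat_mul_tauHatDeriv, hσc, mul_zero, add_zero]
    exact mul_pos (hτ c hc) (hη c hc)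
  rw [(hasDerivAt_sigmaHat (hu.differentiable (by norm_num) c) (hv.differentiable (by norm_num) c)
    (hu.differentiable_deriv_two c) (hv.differentiable_deriv_two c) (hr c hc.1).ne').deriv]
  exact div_pos (pos_of_mul_pos_left hωW (hW c hc)) (hr c hc.1)

end FundIC

theorem sigma_pos_rho_neg_at_first_focal_general
    (a b : ℝ) (r p q u v : ℝ → ℝ)
    (hpc : Continuous p) (hqc : Continuous q)
    (hrpos : ∀ x ∈ Ici a, 0 < r x) (hppos : ∀ x ∈ Ici a, 0 < p x)
    (hu : ContDiff ℝ 4 u) (hv : ContDiff ℝ 4 v)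
    (hru : ContDiff ℝ 2 (fun x => r x * deriv (deriv u) x))
    (hrv : ContDiff ℝ 2 (fun x => r x * deriv (deriv v) x))
    (husol : IsSol4 r p q u) (hvsol : IsSol4 r p q v)
    (hic : FundIC r q a u v)
    (hb : a < b) (hbz : deriv (tauHat r q u v) b = 0)
    (hbmin : ∀ x ∈ Ioo a b, deriv (tauHat r q u v) x ≠ 0) :
    (∀ x ∈ Ioc a b, 0 < sigmaHat u v x) ∧ rhoHat r q u v b < 0 := by
  have hu1 : ContDiff ℝ 1 u := hu.of_le (by norm_num)
  have hv1 : ContDiff ℝ 1 v := hv.of_le (by norm_num)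
  have hu2 : ContDiff ℝ 2 u := hu.of_le (by norm_num)
  have hv2 : ContDiff ℝ 2 v := hv.of_le (by norm_num)
  have hTu : Continuous (T4 r q u) := continuous_T4 hqc hu1 (hru.of_le (by norm_num))
  have hTv : Continuous (T4 r q v) := continuous_T4 hqc hv1 (hrv.of_le (by norm_num))
  have hderiv (x : ℝ) (hx : a ≤ x) (hd : DifferentiableAt ℝ (tauHat r q u v) x) :
      deriv (tauHat r q u v) x = tauHatDeriv r q u v x :=
    (hasDerivAt_tauHat husol hvsol (hu1.differentiable one_ne_zero x)
      (hv1.differentiable one_ne_zero x) hTu.continuousAt hTv.continuousAt (hppos x hx).ne' hd).deriv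
  have hderivIoo : ∀ x ∈ Ioo a b, deriv (tauHat r q u v) x = tauHatDeriv r q u v x := fun x hx =>
    hderiv x hx.1.le (differentiableAt_of_deriv_ne_zero (hbmin x hx))
  have hWc : Continuous (tauHatDeriv r q u v) := by unfold tauHatDeriv; fun_prop
  have hWpos : ∀ x ∈ Ioo a b, 0 < tauHatDeriv r q u v x :=
    pos_on_Ioo_of_ne_zero hWc.continuousOn (by simp [hic.tauHatDeriv_eq_one])
      fun x hx => hderivIoo x hx ▸ hbmin x hx
  have hτ : ∀ x ∈ Ioc a b, 0 < tauHat r q u v x :=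
    pos_on_Ioc_of_deriv_pos ((hu1.continuous.mul hTv).sub (hv1.continuous.mul hTu)).continuousOn
      hic.tauHat_eq_zero fun x hx => hderivIoo x hx ▸ hWpos x hx
  have hη := hic.etaHat_pos hu2 hv2 hru hrv hWpos
  have hσ := hic.sigmaHat_pos (fun x hx => hrpos x (mem_Ici_of_Ioi hx)) hu2 hv2 hru hrv hτ hη
    fun x hx => nonneg_on_Icc_of_pos_on_Ioo hb hWc.continuousOn hWpos x (Ioc_subset_Icc_self hx)
  have hb' : b ∈ Ioc a b := ⟨hb, le_rfl⟩
  have hWb : tauHatDeriv r q u v b = 0 := by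
    rw [← hbz, hderiv b hb.le (differentiableAt_tauHat husol hvsol
      ((eventually_gt_nhds hb).mono fun z hz => (hppos z hz.le).ne') hpc.continuousAt
      (hu1.differentiable one_ne_zero b) (hv1.differentiable one_ne_zero b) hTu.continuousAt
      hTv.continuousAt (hσ b hb').ne')]
  refine ⟨hσ, ?_⟩
  have hplucker := omegaHat_mul_tauHatDeriv (r := r) (q := q) (u := u) (v := v) (x := b)
  rw [hWb, mul_zero] at hplucker
  nlinarith [mul_pos (hτ b hb') (hη b hb'), hσ b hb']

/-- If the first systems-focal point `μ̂₁(a) = b` (first zero of `τ̂'` in `(a, ∞)`)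
exists, then `σ̂ > 0` on `(a, μ̂₁(a)]` and `ρ̂(μ̂₁(a)) < 0`. -/
theorem sigma_pos_rho_neg_at_first_focal
    (a b : ℝ) (r p q u v : ℝ → ℝ)
    (hrc : Continuous r) (hpc : Continuous p) (hqc : Continuous q)
    (hrpos : ∀ x ∈ Ici a, 0 < r x) (hppos : ∀ x ∈ Ici a, 0 < p x)
    (hu : ContDiff ℝ 4 u) (hv : ContDiff ℝ 4 v)
    (hru : ContDiff ℝ 2 (fun x => r x * deriv (deriv u) x))
    (hrv : ContDiff ℝ 2 (fun x => r x * deriv (deriv v) x))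
    (husol : IsSol4 r p q u) (hvsol : IsSol4 r p q v)
    (hic : FundIC r q a u v)
    (hb : a < b) (hbz : deriv (tauHat r q u v) b = 0)
    (hbmin : ∀ x ∈ Ioo a b, deriv (tauHat r q u v) x ≠ 0) :
    (∀ x ∈ Ioc a b, 0 < sigmaHat u v x) ∧ rhoHat r q u v b < 0 :=
  sigma_pos_rho_neg_at_first_focal_general a b r p q u v hpc hqc hrpos hppos hu hv hru hrv husol
    hvsol hic hb hbz hbmin
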